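/- Let G be a connected loopless multigraph on a finite vertex set V such that 2·x = 0 for every element x of the Jacobian Jac(G) (i.e., the exponent of Jac(G) divides 2). Then w(u,v) ≤ 2 for all vertices u, v, and the underlying simple graph of G is acyclic; that is, G is a tree in which some edges have been doubled. -/

import Mathlib

open Finset

variable {V : Type*}

/-- Degree of a vertex in the loopless multigraph with edge-multiplicity function `w`. -/
def mgDeg [Fintype V] (w : V → V → ℕ) (v : V) : ℕ := ∑ u, w v u

/-- The Laplacian of the multigraph, as an additive homomorphism on `V → ℤ`. -/
def mgLap [Fintype V] (w : V → V → ℕ) : (V → ℤ) →+ (V → ℤ) :=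
  AddMonoidHom.mk' (fun f v => (mgDeg w v : ℤ) * f v - ∑ u, (w v u : ℤ) * f u)
    (by
      intro f g
      funext v
      simp [mul_add, Finset.sum_add_distrib]
      ring)

/-- The group `Div⁰(G)` of divisors of degree zero. -/
def mgDiv0 (V : Type*) [Fintype V] : AddSubgroup (V → ℤ) :=
  AddMonoidHom.ker
    (AddMonoidHom.mk' (fun D : V → ℤ => ∑ v, D v)
      (by intro a b; simp [Finset.sum_add_distrib]))

/-- The group `Prin(G)` of principal divisors, the image of the Laplacian. -/
def mgPrin [Fintype V] (w : V → V → ℕ) : AddSubgroup (V → ℤ) := (mgLap w).range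

/-- The Jacobian `Jac(G) = Div⁰(G)/Prin(G)`. -/
abbrev mgJac (V : Type*) [Fintype V] (w : V → V → ℕ) : Type _ :=
  mgDiv0 V ⧸ ((mgPrin w).addSubgroupOf (mgDiv0 V))

/-- The underlying simple graph: `u` adjacent to `v` iff `u ≠ v` and `w u v > 0`. -/
def mgUnderlying (w : V → V → ℕ) : SimpleGraph V :=
  SimpleGraph.fromRel (fun u v => 0 < w u v)

/-!
For an edge `ab`, the hypothesis `2 • Jac = 0` makes `2(a - b)` principal: `Δf = 2(a - b)` for
some `f : V → ℤ`. By the maximum principle `f` is maximal at `a` and minimal at `b`, and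
`Δf(a) = ∑ᵤ w(a,u)(f a - f u) = 2` is a sum of nonnegative terms, so
`w(a,b) ≤ w(a,b)(f a - f b) ≤ 2`. The same budget shows that `ab` is the only edge leaving the
level set `{f = f a}`, so every edge is a bridge.
-/

namespace SimpleGraph

variable {G : SimpleGraph V}

lemma Preconnected.mem_of_forall_adj_mem (hG : G.Preconnected) {S : Set V} {x : V} (y : V)
    (hx : x ∈ S) (hS : ∀ u v, G.Adj u v → u ∈ S → v ∈ S) : y ∈ S := by
  by_contra hy
  obtain ⟨p⟩ := hG x y
  obtain ⟨d, -, hd, hd'⟩ := p.exists_boundary_dart S hx hy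
  exact hd' (hS _ _ d.adj hd)

lemma isBridge_of_forall_adj_mem_notMem {S : Set V} {a b : V} (ha : a ∈ S) (hb : b ∉ S)
    (hS : ∀ u v, G.Adj u v → u ∈ S → v ∉ S → u = a ∧ v = b) : G.IsBridge s(a, b) := by
  rw [isBridge_iff, reachable_deleteEdges_iff_exists_walk]
  rintro ⟨p, hp⟩
  obtain ⟨⟨⟨u, v⟩, huv⟩, hd, hu, hv⟩ := p.exists_boundary_dart S ha hb
  obtain ⟨rfl, rfl⟩ := hS u v huv hu hv
  exact hp (List.mem_map_of_mem hd)

end SimpleGraph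

variable {w : V → V → ℕ}

lemma mgUnderlying_adj (hsym : ∀ u v, w u v = w v u) {u v : V} :
    (mgUnderlying w).Adj u v ↔ u ≠ v ∧ 0 < w u v := by
  rw [mgUnderlying, SimpleGraph.fromRel_adj, hsym v u, or_self]

variable [Fintype V]

lemma mgLap_apply (f : V → ℤ) (v : V) : mgLap w f v = ∑ u, (w v u : ℤ) * (f v - f u) := by
  simp only [mgLap, AddMonoidHom.mk'_apply, mgDeg, mul_sub, sum_sub_distrib, Nat.cast_sum, sum_mul]

lemma exists_mgLap_eq_nsmul {n : ℕ} (hexp : ∀ x : mgJac V w, n • x = 0) {D : V → ℤ}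
    (hD : D ∈ mgDiv0 V) : ∃ f, mgLap w f = n • D := by
  have h := hexp (QuotientAddGroup.mk ⟨D, hD⟩)
  rwa [← QuotientAddGroup.mk_nsmul, QuotientAddGroup.eq_zero_iff,
    AddSubgroup.mem_addSubgroupOf] at h

lemma single_sub_single_mem_mgDiv0 [DecidableEq V] (a b : V) :
    Pi.single a 1 - Pi.single b 1 ∈ mgDiv0 V := by
  simp [mgDiv0, sum_sub_distrib]

lemma eq_of_forall_le_of_mgLap_nonpos {f : V → ℤ} {x y : V} (hmax : ∀ u, f u ≤ f x)
    (hx : mgLap w f x ≤ 0) (hxy : 0 < w x y) : f y = f x := by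
  have hterm : ∀ u ∈ univ, 0 ≤ (w x u : ℤ) * (f x - f u) :=
    fun u _ => mul_nonneg (Nat.cast_nonneg _) (sub_nonneg.2 (hmax u))
  rw [mgLap_apply] at hx
  have hy := (sum_eq_zero_iff_of_nonneg hterm).1 (le_antisymm hx (sum_nonneg hterm)) y (mem_univ y)
  have hw : (w x y : ℤ) ≠ 0 := by positivity
  linarith [(mul_eq_zero.1 hy).resolve_left hw]

lemma le_of_mgLap_nonpos (hsym : ∀ u v, w u v = w v u) (hconn : (mgUnderlying w).Connected)
    {f : V → ℤ} {a : V} (h : ∀ x ≠ a, mgLap w f x ≤ 0) (v : V) : f v ≤ f a := by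
  obtain ⟨c, -, hc⟩ := exists_max_image univ f ⟨a, mem_univ a⟩
  by_contra hlt
  have ha : f a ≠ f c := by linarith [hc v (mem_univ v)]
  refine ha (hconn.preconnected.mem_of_forall_adj_mem (S := {x | f x = f c}) a rfl ?_)
  intro x y hxy (hx : f x = f c)
  have hxa : x ≠ a := by rintro rfl; exact ha hx
  exact (eq_of_forall_le_of_mgLap_nonpos (fun u => hx ▸ hc u (mem_univ u)) (h x hxa)
    ((mgUnderlying_adj hsym).1 hxy).2).trans hx

-- The factor `2` is left out of the name: `f` is a potential for the divisor `2(a - b)`.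
def IsDipolePotential [DecidableEq V] (w : V → V → ℕ) (a b : V) (f : V → ℤ) : Prop :=
  mgLap w f = 2 • (Pi.single a 1 - Pi.single b 1)

namespace IsDipolePotential

variable [DecidableEq V] {a b : V} {f : V → ℤ}

lemma neg (hf : IsDipolePotential w a b f) : IsDipolePotential w b a (-f) := by
  rw [IsDipolePotential, map_neg, hf, ← smul_neg, neg_sub]

lemma mgLap_nonpos (hf : IsDipolePotential w a b f) {x : V} (hx : x ≠ a) : mgLap w f x ≤ 0 := by
  rw [hf]
  simp only [Pi.smul_apply, Pi.sub_apply, Pi.single_apply, if_neg hx]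
  split_ifs <;> norm_num

lemma mgLap_left (hf : IsDipolePotential w a b f) (hab : a ≠ b) : mgLap w f a = 2 := by
  rw [hf]
  simp [hab]

lemma le_left (hsym : ∀ u v, w u v = w v u) (hconn : (mgUnderlying w).Connected)
    (hf : IsDipolePotential w a b f) (v : V) : f v ≤ f a :=
  le_of_mgLap_nonpos hsym hconn (fun _ => hf.mgLap_nonpos) v

lemma right_le (hsym : ∀ u v, w u v = w v u) (hconn : (mgUnderlying w).Connected)
    (hf : IsDipolePotential w a b f) (v : V) : f b ≤ f v :=
  neg_le_neg_iff.1 (hf.neg.le_left hsym hconn v)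

lemma right_lt_left (hsym : ∀ u v, w u v = w v u) (hconn : (mgUnderlying w).Connected)
    (hf : IsDipolePotential w a b f) (hab : a ≠ b) : f b < f a := by
  refine lt_of_le_of_ne (hf.right_le hsym hconn a) fun hba => ?_
  have hconst : ∀ u, f u = f a := fun u =>
    le_antisymm (hf.le_left hsym hconn u) (hba ▸ hf.right_le hsym hconn u)
  have h2 := hf.mgLap_left hab
  rw [mgLap_apply, sum_eq_zero fun u _ => by rw [hconst u, sub_self, mul_zero]] at h2
  exact absurd h2 (by norm_num)

lemma mgLap_left_term_nonneg (hsym : ∀ u v, w u v = w v u)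
    (hconn : (mgUnderlying w).Connected) (hf : IsDipolePotential w a b f) :
    ∀ u ∈ univ, 0 ≤ (w a u : ℤ) * (f a - f u) :=
  fun u _ => mul_nonneg (Nat.cast_nonneg _) (sub_nonneg.2 (hf.le_left hsym hconn u))

lemma le_two (hsym : ∀ u v, w u v = w v u) (hconn : (mgUnderlying w).Connected)
    (hf : IsDipolePotential w a b f) (hab : a ≠ b) : w a b ≤ 2 := by
  have hterm : (w a b : ℤ) * (f a - f b) ≤ 2 := by
    rw [← hf.mgLap_left hab, mgLap_apply]
    exact single_le_sum (hf.mgLap_left_term_nonneg hsym hconn) (mem_univ b)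
  have hlt := hf.right_lt_left hsym hconn hab
  have : (w a b : ℤ) ≤ 2 := by nlinarith
  exact_mod_cast this

lemma isBridge (hsym : ∀ u v, w u v = w v u) (hconn : (mgUnderlying w).Connected)
    (hf : IsDipolePotential w a b f) (hadj : (mgUnderlying w).Adj a b) :
    (mgUnderlying w).IsBridge s(a, b) := by
  have hab := hadj.ne
  have hlt := hf.right_lt_left hsym hconn hab
  refine SimpleGraph.isBridge_of_forall_adj_mem_notMem (S := {x | f x = f a}) rfl hlt.ne ?_
  intro x y hxy (hx : f x = f a) (hy : f y ≠ f a)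
  have hw := ((mgUnderlying_adj hsym).1 hxy).2
  obtain rfl : a = x := by
    by_contra hax
    exact hy ((eq_of_forall_le_of_mgLap_nonpos (fun u => hx ▸ hf.le_left hsym hconn u)
      (hf.mgLap_nonpos (Ne.symm hax)) hw).trans hx)
  refine ⟨rfl, ?_⟩
  by_contra hyb
  -- otherwise `y ≠ b` would be a minimum of `f` with the higher neighbour `a`
  have hby : f b < f y := by
    refine lt_of_le_of_ne (hf.right_le hsym hconn y) fun hby => hlt.ne ?_
    have hmin : ∀ u, (-f) u ≤ (-f) y := fun u => by
      simpa [← hby] using hf.right_le hsym hconn u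
    have := eq_of_forall_le_of_mgLap_nonpos hmin (hf.neg.mgLap_nonpos hyb) (hsym y a ▸ hw)
    simp only [Pi.neg_apply, neg_inj] at this
    rw [hby, this]
  -- now `f a - f b ≥ 2`, so the edge `ab` alone uses up the budget `Δf(a) = 2`
  have hsum : (w a y : ℤ) * (f a - f y) + (w a b : ℤ) * (f a - f b) ≤ 2 := by
    rw [← hf.mgLap_left hab, mgLap_apply]
    exact add_le_sum (hf.mgLap_left_term_nonneg hsym hconn) (mem_univ y) (mem_univ b) hyb
  have hwab : (1 : ℤ) ≤ w a b := by exact_mod_cast ((mgUnderlying_adj hsym).1 hadj).2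
  have hway : (1 : ℤ) ≤ w a y := by exact_mod_cast hw
  have hya : f y < f a := lt_of_le_of_ne (hf.le_left hsym hconn y) hy
  nlinarith

end IsDipolePotential

lemma exists_isDipolePotential [DecidableEq V] (hexp : ∀ x : mgJac V w, 2 • x = 0) (a b : V) :
    ∃ f, IsDipolePotential w a b f :=
  exists_mgLap_eq_nsmul hexp (single_sub_single_mem_mgDiv0 a b)

/-- a connected loopless multigraph in which every element of the Jacobian is
killed by 2 has all edge multiplicities at most 2 and acyclic underlying simple graph,
i.e. it is a tree with some edges doubled. -/
theorem stmt5 (V : Type*) [Fintype V] [DecidableEq V] (w : V → V → ℕ)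
    (hsym : ∀ u v, w u v = w v u) (hloop : ∀ v, w v v = 0)
    (hconn : (mgUnderlying w).Connected)
    (hexp : ∀ x : mgJac V w, 2 • x = 0) :
    (∀ u v : V, w u v ≤ 2) ∧ (mgUnderlying w).IsAcyclic := by
  refine ⟨fun u v => ?_, SimpleGraph.isAcyclic_iff_forall_adj_isBridge.2 fun u v huv => ?_⟩
  · obtain rfl | huv := eq_or_ne u v
    · simp [hloop]
    · obtain ⟨f, hf⟩ := exists_isDipolePotential hexp u v
      exact hf.le_two hsym hconn huv
  · obtain ⟨f, hf⟩ := exists_isDipolePotential hexp u v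
    exact hf.isBridge hsym hconn huv
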